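/- Let α > 0, β, γ, δ ≥ 0 with αδ - βγ ≠ 0 and β + γ > 0, and let H(w,w') = (α conj(w₁)w'₁ + β conj(w₂)w'₂, γ conj(w₁)w'₁ + δ conj(w₂)w'₂) be the corresponding ℂ²-Hermitian form with values in ℂ². Suppose Φ : ℂ² → ℂ² is a ℂ-linear map such that for every w ∈ ℂ², the real-linear map x ↦ Im H(w, Φ(x)) on ℝ² is diagonal (i.e., lies in g(Ω₁)), and c : ℂ² × ℂ² → ℂ² is a symmetric ℂ-bilinear form satisfying H(w, c(w',w')) = 2i H(Φ(H(w',w)), w') for all w, w' ∈ ℂ². Then Φ = 0 and c = 0. -/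
import Mathlib


open Matrix

/-- The `ℂ²`-valued Hermitian form
`H(w,w') = (α conj(w₁)w'₁ + β conj(w₂)w'₂, γ conj(w₁)w'₁ + δ conj(w₂)w'₂)` on `ℂ²`. -/
noncomputable def hermD3 (α β γ δ : ℝ) (w w' : Fin 2 → ℂ) : Fin 2 → ℂ :=
  ![(α : ℂ) * (starRingEnd ℂ) (w 0) * w' 0 + (β : ℂ) * (starRingEnd ℂ) (w 1) * w' 1,
    (γ : ℂ) * (starRingEnd ℂ) (w 0) * w' 0 + (δ : ℂ) * (starRingEnd ℂ) (w 1) * w' 1]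

/-- (`g_{1/2} = 0` for the Siegel domain `D₃`.) If `Φ : ℂ² → ℂ²` is
`ℂ`-linear with `x ↦ Im H(w,Φ(x))` diagonal on `ℝ²` for every `w`, and `c` is a
symmetric `ℂ`-bilinear form with `H(w, c(w',w')) = 2i H(Φ(H(w',w)), w')`, then
`Φ = 0` and `c = 0`. -/
theorem g_half_zero_D3 (α β γ δ : ℝ) (hα : 0 < α) (hβ : 0 ≤ β) (hγ : 0 ≤ γ) (hδ : 0 ≤ δ)
    (hdet : α * δ - β * γ ≠ 0) (hβγ : 0 < β + γ)
    (Φ : (Fin 2 → ℂ) →ₗ[ℂ] (Fin 2 → ℂ))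
    (hdiag : ∀ w : Fin 2 → ℂ, ∀ i j : Fin 2, i ≠ j →
      ((hermD3 α β γ δ w (Φ (fun l => if l = j then 1 else 0))) i).im = 0)
    (c : (Fin 2 → ℂ) →ₗ[ℂ] (Fin 2 → ℂ) →ₗ[ℂ] (Fin 2 → ℂ))
    (hsym : ∀ u v : Fin 2 → ℂ, c u v = c v u)
    (hc : ∀ w w' : Fin 2 → ℂ,
      hermD3 α β γ δ w (c w' w')
        = (2 * Complex.I) • hermD3 α β γ δ (Φ (hermD3 α β γ δ w' w)) w') :
    Φ = 0 ∧ c = 0 := by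
  have hαn : α ≠ 0 := ne_of_gt hα
  have h2I : (2 * Complex.I : ℂ) ≠ 0 := by simp [Complex.I_ne_zero]
  have hdetC : ((α : ℂ) * δ - β * γ) ≠ 0 := by exact_mod_cast hdet
  have hδ0 : β = 0 → δ ≠ 0 := by
    intro hb hd; apply hdet; rw [hb, hd]; ring
  have hE0 : (fun l : Fin 2 => if l = (0:Fin 2) then (1:ℂ) else 0) = ![1,0] := by
    funext l; fin_cases l <;> simp
  have hE1 : (fun l : Fin 2 => if l = (1:Fin 2) then (1:ℂ) else 0) = ![0,1] := by
    funext l; fin_cases l <;> simp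
  -- Step 1: consequences of hdiag
  have d1 := hdiag ![1,0] 0 1 (by decide)
  have d2 := hdiag ![Complex.I,0] 0 1 (by decide)
  have d3 := hdiag ![0,1] 0 1 (by decide)
  have d4 := hdiag ![0,Complex.I] 0 1 (by decide)
  have d5 := hdiag ![1,0] 1 0 (by decide)
  have d6 := hdiag ![Complex.I,0] 1 0 (by decide)
  have d7 := hdiag ![0,1] 1 0 (by decide)
  have d8 := hdiag ![0,Complex.I] 1 0 (by decide)
  rw [hE1] at d1 d2 d3 d4
  rw [hE0] at d5 d6 d7 d8
  simp [hermD3] at d1 d2 d3 d4 d5 d6 d7 d8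
  have hq : Φ ![0,1] 0 = 0 := by
    apply Complex.ext
    · rcases d2 with h | h; exact absurd h hαn; exact h
    · rcases d1 with h | h; exact absurd h hαn; exact h
  have hbs : β = 0 ∨ Φ ![0,1] 1 = 0 := by
    rcases d3 with h | h; exact Or.inl h
    rcases d4 with h' | h'; exact Or.inl h'
    exact Or.inr (Complex.ext h' h)
  have hgp : γ = 0 ∨ Φ ![1,0] 0 = 0 := by
    rcases d5 with h | h; exact Or.inl h
    rcases d6 with h' | h'; exact Or.inl h'
    exact Or.inr (Complex.ext h' h)
  have hdr : δ = 0 ∨ Φ ![1,0] 1 = 0 := by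
    rcases d7 with h | h; exact Or.inl h
    rcases d8 with h' | h'; exact Or.inl h'
    exact Or.inr (Complex.ext h' h)
  -- Step 2: consequences of hc
  have hPhi : ∀ a b : ℂ, Φ ![a,b] = ![a * Φ ![1,0] 0 + b * Φ ![0,1] 0,
      a * Φ ![1,0] 1 + b * Φ ![0,1] 1] := by
    intro a b
    have hv : (![a,b] : Fin 2 → ℂ) = a • ![1,0] + b • ![0,1] := by
      funext l; fin_cases l <;> simp
    rw [hv, map_add, _root_.map_smul, _root_.map_smul]
    funext l; fin_cases l <;> simp
  have hh1 : hermD3 α β γ δ ![1,1] ![1,0] = ![(α:ℂ), (γ:ℂ)] := by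
    funext l; fin_cases l <;> simp [hermD3]
  have hh2 : hermD3 α β γ δ ![1,1] ![0,1] = ![(β:ℂ), (δ:ℂ)] := by
    funext l; fin_cases l <;> simp [hermD3]
  have eq1 := congrFun (hc ![1,0] ![1,1]) 0
  have eq2 := congrFun (hc ![1,0] ![1,1]) 1
  have eq3 := congrFun (hc ![0,1] ![1,1]) 0
  have eq4 := congrFun (hc ![0,1] ![1,1]) 1
  rw [hh1, hPhi] at eq1 eq2
  rw [hh2, hPhi] at eq3 eq4
  rw [hq] at eq1 eq2 eq3 eq4
  simp [hermD3] at eq1 eq2 eq3 eq4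
  have key1 : (2 * Complex.I) * (((α:ℂ) * δ - β * γ) *
      ((α:ℂ) * (starRingEnd ℂ) (Φ ![1,0] 1) + γ * (starRingEnd ℂ) (Φ ![0,1] 1))) = 0 := by
    linear_combination (γ : ℂ) * eq1 - (α : ℂ) * eq2
  have key2 : (2 * Complex.I) * (((α:ℂ) * δ - β * γ) *
      ((β:ℂ) * (starRingEnd ℂ) (Φ ![1,0] 0))) = 0 := by
    linear_combination (β : ℂ) * eq4 - (δ : ℂ) * eq3
  have hA : (α:ℂ) * (starRingEnd ℂ) (Φ ![1,0] 1) + γ * (starRingEnd ℂ) (Φ ![0,1] 1) = 0 := by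
    rcases mul_eq_zero.mp key1 with h | h
    · exact absurd h h2I
    rcases mul_eq_zero.mp h with h' | h'
    · exact absurd h' hdetC
    · exact h'
  have hBP : (β:ℂ) * (starRingEnd ℂ) (Φ ![1,0] 0) = 0 := by
    rcases mul_eq_zero.mp key2 with h | h
    · exact absurd h h2I
    rcases mul_eq_zero.mp h with h' | h'
    · exact absurd h' hdetC
    · exact h'
  -- now solve: p = r = s = 0
  have hp : Φ ![1,0] 0 = 0 := by
    by_cases hb : β = 0
    · rcases hgp with h | h
      · exfalso; rw [hb, h] at hβγ; simp at hβγ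
      · exact h
    · rcases mul_eq_zero.mp hBP with h | h
      · exact absurd (by exact_mod_cast h) hb
      · simpa using congrArg (starRingEnd ℂ) h
  have hrs : Φ ![1,0] 1 = 0 ∧ Φ ![0,1] 1 = 0 := by
    by_cases hb : β = 0
    · have hr : Φ ![1,0] 1 = 0 := by
        rcases hdr with h | h
        · exact absurd h (hδ0 hb)
        · exact h
      refine ⟨hr, ?_⟩
      have hγ0 : γ ≠ 0 := by intro h; rw [hb, h] at hβγ; simp at hβγ
      have : (γ:ℂ) * (starRingEnd ℂ) (Φ ![0,1] 1) = 0 := by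
        rw [hr] at hA; simpa using hA
      rcases mul_eq_zero.mp this with h | h
      · exact absurd (by exact_mod_cast h) hγ0
      · simpa using congrArg (starRingEnd ℂ) h
    · have hs : Φ ![0,1] 1 = 0 := by
        rcases hbs with h | h; exact absurd h hb; exact h
      refine ⟨?_, hs⟩
      have : (α:ℂ) * (starRingEnd ℂ) (Φ ![1,0] 1) = 0 := by
        rw [hs] at hA; simpa using hA
      rcases mul_eq_zero.mp this with h | h
      · exact absurd (by exact_mod_cast h) hαn
      · simpa using congrArg (starRingEnd ℂ) h
  obtain ⟨hr, hs⟩ := hrs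
  -- Φ = 0
  have hΦ : Φ = 0 := by
    apply LinearMap.ext; intro v
    have hv : v = v 0 • ![1,0] + v 1 • ![0,1] := by
      funext l; fin_cases l <;> simp
    rw [hv, map_add, _root_.map_smul, _root_.map_smul]
    have h0 : Φ ![1,0] = 0 := by funext l; fin_cases l; exact hp; exact hr
    have h1 : Φ ![0,1] = 0 := by funext l; fin_cases l; exact hq; exact hs
    simp [h0, h1]
  refine ⟨hΦ, ?_⟩
  -- c = 0
  have hczz : ∀ w' : Fin 2 → ℂ, c w' w' = 0 := by
    intro w'
    have g0 := congrFun (hc ![1,0] w') 0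
    have g1 := congrFun (hc ![0,1] w') 0
    have g2 := congrFun (hc ![0,1] w') 1
    rw [hΦ] at g0 g1 g2
    simp [hermD3] at g0 g1 g2
    have hC0 : c w' w' 0 = 0 := by
      rcases g0 with h | h; exact absurd h hαn; exact h
    have hC1 : c w' w' 1 = 0 := by
      by_cases hb : β = 0
      · rcases g2 with h | h; exact absurd h (hδ0 hb); exact h
      · rcases g1 with h | h; exact absurd h hb; exact h
    funext l; fin_cases l; exact hC0; exact hC1
  apply LinearMap.ext; intro u; apply LinearMap.ext; intro v
  have h := hczz (u + v)
  simp only [map_add, LinearMap.add_apply] at h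
  rw [hczz u, hczz v, hsym v u] at h
  have h2 : c u v + c u v = 0 := by
    have := h
    rw [zero_add, add_zero] at this
    exact this
  simp only [LinearMap.zero_apply]
  funext l
  have h3 : c u v l + c u v l = 0 := by simpa using congrFun h2 l
  exact add_self_eq_zero.mp h3
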